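/- Let φ(x,μ) solve -y'' + qy = μy with φ(0,μ) = sin α, φ'(0,μ) = -cos α, α ∈ (0,π]. For a zero x(μ) ∈ (0,π] of φ(·,μ) the derivative dx/dμ satisfies dx/dμ ≤ 0, with equality possible only if x(μ) = 0; since x(μ) > 0, the inequality is strict: dx/dμ < 0. -/

import Mathlib

/-!
The Wronskian `W = φ_μ φ' - φ'_μ φ` of the solution `φ` and its `μ`-derivative `φ_μ` satisfies
`W' = φ²`, and `W(0) = 0` because the initial data do not depend on `μ`. At the zero `x₀ = x(μ)`
this gives `φ_μ(x₀) φ'(x₀) = ∫₀^{x₀} φ² > 0`, the integral being positive since `φ` has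
nontrivial initial data. Differentiating `φ(x(μ), μ) = 0` gives `φ_μ(x₀) + x'(μ) φ'(x₀) = 0`,
hence `x'(μ) φ'(x₀)² = -∫₀^{x₀} φ² < 0`.

As `q` is only integrable, `φ` is not known to be jointly `C¹`; the chain rule only needs
`(μ, x) ↦ φ'(x, μ)` to be jointly continuous at `(μ, x₀)`. That follows from a bound on `φ(·, m)`
near `x₀` uniform for `m` near `μ`, obtained by a bootstrap on a window where `∫ (|q| + |m|)` is
small.
-/

open Real MeasureTheory Set

noncomputable section

/-- `y` (with derivative `y'`) is a (Carathéodory) solution of `-y'' + q y = μ y` on `[0, π]`,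
written in integral form. -/
def SLSol (q : ℝ → ℝ) (μ : ℝ) (y y' : ℝ → ℝ) : Prop :=
  ContinuousOn y (Icc 0 π) ∧ ContinuousOn y' (Icc 0 π) ∧
  (∀ x ∈ Icc (0:ℝ) π, y x = y 0 + ∫ t in (0:ℝ)..x, y' t) ∧
  (∀ x ∈ Icc (0:ℝ) π, y' x = y' 0 + ∫ t in (0:ℝ)..x, (q t - μ) * y t)

/-- `y` (with derivative `y'`) solves the inhomogeneous equation `-y'' + q y = g + μ y`
(equivalently `y'' = (q - μ) y - g`) on `[0, π]`, in integral form.  With `g` the original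
solution, this is the equation satisfied by the `μ`-derivative of a solution. -/
def SLSolInh (q : ℝ → ℝ) (μ : ℝ) (g y y' : ℝ → ℝ) : Prop :=
  ContinuousOn y (Icc 0 π) ∧ ContinuousOn y' (Icc 0 π) ∧
  (∀ x ∈ Icc (0:ℝ) π, y x = y 0 + ∫ t in (0:ℝ)..x, y' t) ∧
  (∀ x ∈ Icc (0:ℝ) π, y' x = y' 0 + ∫ t in (0:ℝ)..x, ((q t - μ) * y t - g t))

open Filter Topology

theorem integral_mul_primitive_add_primitive_mul {A B : ℝ → ℝ} {a b : ℝ}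
    (hA : IntervalIntegrable A volume a b) (hB : IntervalIntegrable B volume a b) :
    ∫ x in a..b, (A x * ∫ t in a..x, B t) + (∫ t in a..x, A t) * B x =
      (∫ x in a..b, A x) * ∫ x in a..b, B x := by
  have hU := hA.absolutelyContinuousOnInterval_intervalIntegral (left_mem_uIcc (b := b))
  have hV := hB.absolutelyContinuousOnInterval_intervalIntegral (left_mem_uIcc (b := b))
  have hparts := hU.integral_deriv_mul_eq_sub hV
  simp only [intervalIntegral.integral_same, zero_mul, sub_zero] at hparts
  rw [← hparts]
  refine intervalIntegral.integral_congr_ae ?_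
  filter_upwards [hA.ae_hasDerivAt_integral, hB.ae_hasDerivAt_integral] with x hxA hxB hx
  have hx' := uIoc_subset_uIcc hx
  rw [(hxA hx' a left_mem_uIcc).deriv, (hxB hx' a left_mem_uIcc).deriv]

theorem mul_eq_mul_add_integral {u v A B : ℝ → ℝ} {a b : ℝ}
    (hA : IntervalIntegrable A volume a b) (hB : IntervalIntegrable B volume a b)
    (hu : ∀ x ∈ uIcc a b, u x = u a + ∫ t in a..x, A t)
    (hv : ∀ x ∈ uIcc a b, v x = v a + ∫ t in a..x, B t) :
    u b * v b = u a * v a + ∫ x in a..b, A x * v x + u x * B x := by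
  have hUc := intervalIntegral.continuousOn_primitive_interval' hA (left_mem_uIcc (b := b))
  have hVc := intervalIntegral.continuousOn_primitive_interval' hB (left_mem_uIcc (b := b))
  have hsplit : ∫ x in a..b, A x * v x + u x * B x =
      ∫ x in a..b, (A x * v a + u a * B x) +
        ((A x * ∫ t in a..x, B t) + (∫ t in a..x, A t) * B x) :=
    intervalIntegral.integral_congr fun x hx => by simp only [hu x hx, hv x hx]; ring
  rw [hsplit, intervalIntegral.integral_add ((hA.mul_const _).add (hB.const_mul _))
      ((hA.mul_continuousOn hVc).add (hB.continuousOn_mul hUc)),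
    intervalIntegral.integral_add (hA.mul_const _) (hB.const_mul _),
    intervalIntegral.integral_mul_const, intervalIntegral.integral_const_mul,
    integral_mul_primitive_add_primitive_mul hA hB, hu b right_mem_uIcc, hv b right_mem_uIcc]
  ring

theorem sub_eq_integral_of_eq_add_integral {y g : ℝ → ℝ} {a b x x' : ℝ}
    (hg : IntervalIntegrable g volume a b) (hy : ∀ x ∈ Icc a b, y x = y a + ∫ t in a..x, g t)
    (hx : x ∈ Icc a b) (hx' : x' ∈ Icc a b) : y x' - y x = ∫ t in x..x', g t := by
  have hg' : ∀ z ∈ Icc a b, IntervalIntegrable g volume a z := fun z hz =>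
    hg.mono_set (uIcc_subset_uIcc_left (Icc_subset_uIcc hz))
  rw [hy x' hx', hy x hx, ← intervalIntegral.integral_interval_sub_left (hg' x' hx') (hg' x hx)]
  ring

theorem IntervalIntegrable.sub_const_mul_of_continuousOn {q y : ℝ → ℝ} {a b : ℝ} (m : ℝ)
    (hq : IntervalIntegrable q volume a b) (hy : ContinuousOn y (uIcc a b)) :
    IntervalIntegrable (fun t => (q t - m) * y t) volume a b :=
  (hq.sub intervalIntegrable_const).mul_continuousOn hy

theorem abs_integral_sub_mul_le {q y : ℝ → ℝ} {a b m M S : ℝ}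
    (hq : IntervalIntegrable q volume a b) (hm : |m| ≤ M) (hy : ∀ u ∈ uIcc a b, |y u| ≤ S) :
    |∫ u in a..b, (q u - m) * y u| ≤ S * |∫ u in a..b, (|q u| + M)| := by
  have hS : 0 ≤ S := (abs_nonneg _).trans (hy a left_mem_uIcc)
  have hg : IntegrableOn (fun u => S * (|q u| + M)) (uIoc a b) :=
    ((hq.abs.add intervalIntegrable_const).const_mul S).def'
  calc |∫ u in a..b, (q u - m) * y u| = ‖∫ u in uIoc a b, (q u - m) * y u‖ := by
        rw [← Real.norm_eq_abs, intervalIntegral.norm_integral_eq_norm_integral_uIoc]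
    _ ≤ ∫ u in uIoc a b, S * (|q u| + M) := by
        refine norm_integral_le_of_norm_le hg (ae_restrict_of_forall_mem measurableSet_uIoc
          fun u hu => ?_)
        rw [Real.norm_eq_abs, abs_mul, mul_comm]
        have hqm : |q u - m| ≤ |q u| + M := (abs_sub _ _).trans (by gcongr)
        exact mul_le_mul (hy u (uIoc_subset_uIcc hu)) hqm (abs_nonneg _) hS
    _ = S * |∫ u in a..b, (|q u| + M)| := by
        rw [integral_const_mul, intervalIntegral.abs_integral_eq_abs_integral_uIoc,
          abs_of_nonneg (setIntegral_nonneg measurableSet_uIoc fun u _ =>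
            add_nonneg (abs_nonneg _) ((abs_nonneg m).trans hm))]

theorem tendsto_integral_nhdsWithin_zero {g : ℝ → ℝ} {a b x₀ : ℝ}
    (hg : IntervalIntegrable g volume a b) (hx₀ : x₀ ∈ uIcc a b) :
    Tendsto (fun t => ∫ u in x₀..t, g u) (𝓝[uIcc a b] x₀) (𝓝 0) := by
  simpa using (intervalIntegral.continuousOn_primitive_interval' hg hx₀ x₀ hx₀).tendsto

theorem hasDerivAt_comp_of_tendsto_prod {F G : ℝ → ℝ → ℝ} {X : ℝ → ℝ} {s : Set ℝ} {μ D X' : ℝ}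
    (hs : s.OrdConnected) (hG : ∀ m, ContinuousOn (G m) s)
    (hFG : ∀ m, ∀ t ∈ s, ∀ t' ∈ s, F m t' - F m t = ∫ u in t..t', G m u)
    (hF : HasDerivAt (fun m => F m (X μ)) D μ)
    (hGμ : Tendsto (fun p : ℝ × ℝ => G p.1 p.2) (𝓝 μ ×ˢ 𝓝[s] X μ) (𝓝 (G μ (X μ))))
    (hX : HasDerivAt X X' μ) (hXs : ∀ᶠ m in 𝓝 μ, X m ∈ s) :
    HasDerivAt (fun m => F m (X m)) (D + X' * G μ (X μ)) μ := by
  set x₀ := X μ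
  set G₀ := G μ x₀
  have hx₀ : x₀ ∈ s := hXs.self_of_nhds
  have hR : (fun m => ∫ u in x₀..X m, (G m u - G₀)) =o[𝓝 μ] (fun m => m - μ) := by
    refine Asymptotics.IsLittleO.trans_isBigO ?_ hX.isBigO_sub
    rw [Asymptotics.isLittleO_iff]
    intro ε hε
    obtain ⟨pa, hpa, pb, hpb, hp⟩ := eventually_prod_iff.1 (Metric.tendsto_nhds.1 hGμ ε hε)
    obtain ⟨δ, hδ, hball⟩ := Metric.mem_nhdsWithin_iff.1 hpb
    filter_upwards [hpa, hXs, hX.continuousAt (Metric.ball_mem_nhds x₀ hδ)] with m hm hms hmδ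
    have hsub : uIcc x₀ (X m) ⊆ Metric.ball x₀ δ ∩ s := by
      have := Real.ball_eq_Ioo x₀ δ ▸ ordConnected_Ioo (a := x₀ - δ) (b := x₀ + δ)
      exact (this.inter hs).uIcc_subset ⟨Metric.mem_ball_self hδ, hx₀⟩ ⟨hmδ, hms⟩
    have hbound : ∀ u ∈ uIoc x₀ (X m), ‖G m u - G₀‖ ≤ ε := fun u hu =>
      (hp hm (hball (hsub (uIoc_subset_uIcc hu)))).le
    simpa only [Real.norm_eq_abs] using intervalIntegral.norm_integral_le_of_norm_le_const hbound
  have hsplit : ∀ᶠ m in 𝓝 μ, (F m x₀ - F μ x₀ - (m - μ) • D) + G₀ * (X m - x₀ - (m - μ) • X')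
      + ∫ u in x₀..X m, (G m u - G₀) = F m (X m) - F μ x₀ - (m - μ) • (D + X' * G₀) := by
    filter_upwards [hXs] with m hm
    rw [intervalIntegral.integral_sub ((hG m).mono (hs.uIcc_subset hx₀ hm)).intervalIntegrable
      intervalIntegrable_const, ← hFG m x₀ hx₀ (X m) hm, intervalIntegral.integral_const]
    simp only [smul_eq_mul]
    ring
  rw [hasDerivAt_iff_isLittleO] at hF hX ⊢
  exact ((hF.add (hX.const_mul_left G₀)).add hR).congr' hsplit EventuallyEq.rfl

namespace SLSol

variable {q : ℝ → ℝ} {μ : ℝ} {y y' : ℝ → ℝ} {x x' : ℝ}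

theorem sub_eq_integral (hy : SLSol q μ y y') (hx : x ∈ Icc 0 π) (hx' : x' ∈ Icc 0 π) :
    y x' - y x = ∫ t in x..x', y' t :=
  sub_eq_integral_of_eq_add_integral (hy.2.1.intervalIntegrable_of_Icc pi_pos.le) hy.2.2.1 hx hx'

theorem deriv_sub_eq_integral (hq : IntervalIntegrable q volume 0 π) (hy : SLSol q μ y y')
    (hx : x ∈ Icc 0 π) (hx' : x' ∈ Icc 0 π) :
    y' x' - y' x = ∫ t in x..x', (q t - μ) * y t :=
  sub_eq_integral_of_eq_add_integral
    (hq.sub_const_mul_of_continuousOn μ (by rw [uIcc_of_le pi_pos.le]; exact hy.1)) hy.2.2.2 hx hx'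

theorem deriv_zero_eq_zero_of_eqOn_zero (hy : SLSol q μ y y') (hx : x ∈ Ioc 0 π)
    (hzero : EqOn y 0 (Icc 0 x)) : y' 0 = 0 := by
  have hsub : Icc 0 x ⊆ Icc 0 π := Icc_subset_Icc_right hx.2
  have hconst : EqOn y' (fun _ => y' 0) (uIcc 0 x) := by
    intro t ht
    rw [uIcc_of_le hx.1.le] at ht
    rw [hy.2.2.2 t (hsub ht), add_eq_left]
    refine (intervalIntegral.integral_congr (g := fun _ => 0) fun s hs => ?_).trans
      intervalIntegral.integral_zero
    rw [uIcc_of_le ht.1] at hs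
    simp [hzero ⟨hs.1, hs.2.trans ht.2⟩]
  have hyx := hy.2.2.1 x (hsub (right_mem_Icc.2 hx.1.le))
  rw [intervalIntegral.integral_congr hconst, intervalIntegral.integral_const, smul_eq_mul,
    hzero (right_mem_Icc.2 hx.1.le), hzero (left_mem_Icc.2 hx.1.le)] at hyx
  simpa [hx.1.ne'] using hyx

theorem integral_sq_pos (hy : SLSol q μ y y') (hne : y 0 ≠ 0 ∨ y' 0 ≠ 0) (hx : x ∈ Ioc 0 π) :
    0 < ∫ t in (0:ℝ)..x, y t ^ 2 := by
  have hsub : Icc 0 x ⊆ Icc 0 π := Icc_subset_Icc_right hx.2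
  refine intervalIntegral.integral_pos hx.1 ((hy.1.mono hsub).pow 2) (fun t _ => sq_nonneg _) ?_
  by_contra! hall
  have hzero : EqOn y 0 (Icc 0 x) := fun t ht => pow_eq_zero_iff two_ne_zero |>.1 <|
    le_antisymm (hall t ht) (sq_nonneg _)
  exact hne.elim (· (hzero (left_mem_Icc.2 hx.1.le)))
    (· (hy.deriv_zero_eq_zero_of_eqOn_zero hx hzero))

theorem abs_le_of_mem_window (hq : IntervalIntegrable q volume 0 π) (hy : SLSol q μ y y')
    {x₀ lo hi B M : ℝ} (hwin : Icc lo hi ⊆ Icc 0 π) (hx₀ : x₀ ∈ Icc lo hi) (hlen : hi - lo ≤ 1)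
    (hμM : |μ| ≤ M) (hsmall : ∀ t ∈ Icc lo hi, |∫ u in x₀..t, (|q u| + M)| ≤ 1 / 4)
    (hB : |y x₀| ≤ B) (hB' : |y' x₀| ≤ B) (hx : x ∈ Icc lo hi) : |y x| ≤ 3 * B := by
  obtain ⟨t₂, ht₂, hmax⟩ := isCompact_Icc.exists_isMaxOn ⟨x₀, hx₀⟩ (hy.1.mono hwin).abs
  set S := |y t₂|
  -- the two integral equations on the window give `S ≤ 2 B + S / 4`
  have hS : ∀ u ∈ Icc lo hi, |y u| ≤ S := fun u hu => hmax hu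
  have hsub {t} (ht : t ∈ Icc lo hi) : uIcc x₀ t ⊆ Icc lo hi := uIcc_subset_Icc hx₀ ht
  have hdist {t} (ht : t ∈ Icc lo hi) : |t - x₀| ≤ 1 := by
    rw [abs_le]; constructor <;> linarith [ht.1, ht.2, hx₀.1, hx₀.2]
  have hy' : ∀ t ∈ Icc lo hi, |y' t| ≤ B + S / 4 := by
    intro t ht
    have hint : |y' t - y' x₀| ≤ S * (1 / 4) := by
      rw [hy.deriv_sub_eq_integral hq (hwin hx₀) (hwin ht)]
      refine (abs_integral_sub_mul_le (hq.mono_set (uIcc_subset_uIcc (Icc_subset_uIcc (hwin hx₀))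
        (Icc_subset_uIcc (hwin ht)))) hμM fun u hu => hS u (hsub ht hu)).trans ?_
      exact mul_le_mul_of_nonneg_left (hsmall t ht) ((abs_nonneg _).trans (hS x₀ hx₀))
    linarith [abs_sub_abs_le_abs_sub (y' t) (y' x₀)]
  have hS_le : S ≤ B + (B + S / 4) := by
    have hint : |y t₂ - y x₀| ≤ (B + S / 4) * |t₂ - x₀| := by
      rw [hy.sub_eq_integral (hwin hx₀) (hwin ht₂)]
      simpa only [Real.norm_eq_abs] using intervalIntegral.norm_integral_le_of_norm_le_const
        fun u hu => (Real.norm_eq_abs (y' u)).trans_le (hy' u (hsub ht₂ (uIoc_subset_uIcc hu)))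
    have hBS : 0 ≤ B + S / 4 := (abs_nonneg _).trans (hy' x₀ hx₀)
    linarith [abs_sub_abs_le_abs_sub (y t₂) (y x₀), mul_le_of_le_one_right hBS (hdist ht₂)]
  linarith [hS x hx, abs_nonneg (y x₀)]

end SLSol

theorem SLSolInh.wronskian_eq {q : ℝ → ℝ} {μ x : ℝ} {y y' z z' : ℝ → ℝ}
    (hq : IntervalIntegrable q volume 0 π) (hy : SLSol q μ y y') (hz : SLSolInh q μ y z z')
    (hx : x ∈ Icc 0 π) :
    z x * y' x - z' x * y x = z 0 * y' 0 - z' 0 * y 0 + ∫ t in (0:ℝ)..x, y t ^ 2 := by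
  have hsub : uIcc 0 x ⊆ Icc 0 π := uIcc_of_le hx.1 ▸ Icc_subset_Icc_right hx.2
  have hq' : IntervalIntegrable q volume 0 x :=
    hq.mono_set (uIcc_of_le pi_pos.le ▸ hsub)
  have hint {g : ℝ → ℝ} (hg : ContinuousOn g (Icc 0 π)) : IntervalIntegrable g volume 0 x :=
    (hg.mono hsub).intervalIntegrable
  have hqy := hq'.sub_const_mul_of_continuousOn μ (hy.1.mono hsub)
  have hqz := (hq'.sub_const_mul_of_continuousOn μ (hz.1.mono hsub)).sub (hint hy.1)
  have hz'y' := (hint hz.2.1).mul_continuousOn (hy.2.1.mono hsub)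
  rw [mul_eq_mul_add_integral (hint hz.2.1) hqy
      (fun t ht => hz.2.2.1 t (hsub ht)) (fun t ht => hy.2.2.2 t (hsub ht)),
    mul_eq_mul_add_integral hqz (hint hy.2.1)
      (fun t ht => hz.2.2.2 t (hsub ht)) (fun t ht => hy.2.2.1 t (hsub ht)),
    add_sub_add_comm, ← intervalIntegral.integral_sub
      (hz'y'.add (hqy.continuousOn_mul (hz.1.mono hsub)))
      ((hqz.mul_continuousOn (hy.1.mono hsub)).add hz'y')]
  congr 1
  exact intervalIntegral.integral_congr fun t _ => by ring

section Family

variable {q : ℝ → ℝ} {f fx : ℝ → ℝ → ℝ} {μ x₀ : ℝ}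

theorem SLSol.exists_bound_near (hq : IntervalIntegrable q volume 0 π)
    (hsol : ∀ m, SLSol q m (f m) (fx m)) (hx₀ : x₀ ∈ Icc 0 π)
    (hf : ContinuousAt (fun m => f m x₀) μ) (hfx : ContinuousAt (fun m => fx m x₀) μ) :
    ∃ δ > 0, ∃ C, ∀ᶠ m in 𝓝 μ, ∀ t ∈ Icc (max 0 (x₀ - δ)) (min π (x₀ + δ)), |f m t| ≤ C := by
  set M := |μ| + 1
  set B := max |f μ x₀| |fx μ x₀| + 1 with hB
  have hρ := tendsto_integral_nhdsWithin_zero (hq.abs.add (intervalIntegrable_const (c := M)))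
    (Icc_subset_uIcc hx₀)
  rw [uIcc_of_le pi_pos.le] at hρ
  obtain ⟨δ₀, hδ₀, hball⟩ := Metric.mem_nhdsWithin_iff.1 (Metric.tendsto_nhds.1 hρ (1 / 4)
    (by norm_num))
  obtain ⟨δ, hδ, hδδ₀, hδ1⟩ : ∃ δ, 0 < δ ∧ δ < δ₀ ∧ δ ≤ 1 / 2 :=
    ⟨min (δ₀ / 2) (1 / 2), by positivity, (min_le_left _ _).trans_lt (half_lt_self hδ₀),
      min_le_right _ _⟩
  have hwin : Icc (max 0 (x₀ - δ)) (min π (x₀ + δ)) ⊆ Icc 0 π :=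
    Icc_subset_Icc (le_max_left _ _) (min_le_left _ _)
  have hlo := le_max_right 0 (x₀ - δ)
  have hhi := min_le_right π (x₀ + δ)
  refine ⟨δ, hδ, 3 * B, ?_⟩
  filter_upwards [continuous_abs.continuousAt.eventually_lt continuousAt_const (lt_add_one |μ|),
    hf.abs.eventually_lt (g := fun _ => B) continuousAt_const
      (by linarith [le_max_left |f μ x₀| |fx μ x₀|]),
    hfx.abs.eventually_lt (g := fun _ => B) continuousAt_const
      (by linarith [le_max_right |f μ x₀| |fx μ x₀|])]
    with m hm hfm hfxm t ht
  refine (hsol m).abs_le_of_mem_window hq hwin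
    ⟨max_le hx₀.1 (by linarith), le_min hx₀.2 (by linarith)⟩ (by linarith) hm.le
    (fun s hs => ?_) hfm.le hfxm.le ht
  have hsball : s ∈ Metric.ball x₀ δ₀ := by
    rw [Real.ball_eq_Ioo]
    constructor <;> linarith [hs.1, hs.2]
  exact (by simpa only [mem_ofPred_eq, Real.dist_0_eq_abs] using hball ⟨hsball, hwin hs⟩ :
    |∫ u in x₀..s, (|q u| + M)| < 1 / 4).le

theorem SLSol.tendsto_deriv_prod (hq : IntervalIntegrable q volume 0 π)
    (hsol : ∀ m, SLSol q m (f m) (fx m)) (hx₀ : x₀ ∈ Icc 0 π)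
    (hf : ContinuousAt (fun m => f m x₀) μ) (hfx : ContinuousAt (fun m => fx m x₀) μ) :
    Tendsto (fun p : ℝ × ℝ => fx p.1 p.2) (𝓝 μ ×ˢ 𝓝[Icc 0 π] x₀) (𝓝 (fx μ x₀)) := by
  obtain ⟨δ, hδ, C, hC⟩ := SLSol.exists_bound_near hq hsol hx₀ hf hfx
  set M := |μ| + 1
  have hρ := tendsto_integral_nhdsWithin_zero (hq.abs.add (intervalIntegrable_const (c := M)))
    (Icc_subset_uIcc hx₀)
  rw [uIcc_of_le pi_pos.le] at hρ
  have hCρ : Tendsto (fun t => C * |∫ u in x₀..t, (|q u| + M)|) (𝓝[Icc 0 π] x₀) (𝓝 0) := by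
    simpa using hρ.abs.const_mul C
  have hwin : ∀ᶠ t in 𝓝[Icc 0 π] x₀, t ∈ Icc (max 0 (x₀ - δ)) (min π (x₀ + δ)) := by
    filter_upwards [self_mem_nhdsWithin, nhdsWithin_le_nhds (Ioo_mem_nhds (sub_lt_self x₀ hδ)
      (lt_add_of_pos_right x₀ hδ))] with t ht ht'
    exact ⟨max_le ht.1 ht'.1.le, le_min ht.2 ht'.2.le⟩
  rw [Metric.tendsto_nhds]
  intro ε hε
  filter_upwards [(hC.and ((continuous_abs.continuousAt.eventually_lt continuousAt_const
      (lt_add_one |μ|)).and (Metric.tendsto_nhds.1 hfx (ε / 2) (half_pos hε)))).prod_mk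
      ((hCρ.eventually (gt_mem_nhds (half_pos hε))).and hwin)]
    with ⟨m, t⟩ ⟨⟨hCm, hm, hfxm⟩, hρt, htwin⟩
  have hx₀win : x₀ ∈ Icc (max 0 (x₀ - δ)) (min π (x₀ + δ)) :=
    ⟨max_le hx₀.1 (by linarith), le_min hx₀.2 (by linarith)⟩
  have htI : t ∈ Icc 0 π := Icc_subset_Icc (le_max_left _ _) (min_le_left _ _) htwin
  have hdiff : |fx m t - fx m x₀| ≤ C * |∫ u in x₀..t, (|q u| + M)| := by
    rw [(hsol m).deriv_sub_eq_integral hq hx₀ htI]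
    exact abs_integral_sub_mul_le (hq.mono_set (uIcc_subset_uIcc (Icc_subset_uIcc hx₀)
      (Icc_subset_uIcc htI))) hm.le fun u hu => hCm u (uIcc_subset_Icc hx₀win htwin hu)
  rw [Real.dist_eq] at hfxm ⊢
  linarith [abs_sub_le (fx m t) (fx m x₀) (fx μ x₀)]

end Family

theorem zero_curve_deriv_nonpos_and_strict_general
    (q : ℝ → ℝ) (hq : IntervalIntegrable q volume 0 π)
    (α : ℝ)
    (f fx fd fxd : ℝ → ℝ → ℝ)
    (hsol : ∀ μ : ℝ, SLSol q μ (f μ) (fx μ))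
    (hinit : ∀ μ : ℝ, f μ 0 = sin α ∧ fx μ 0 = -cos α)
    (hfd : ∀ μ : ℝ, ∀ x ∈ Icc (0:ℝ) π, HasDerivAt (fun m => f m x) (fd μ x) μ)
    (hfxd : ∀ μ : ℝ, ∀ x ∈ Icc (0:ℝ) π, HasDerivAt (fun m => fx m x) (fxd μ x) μ)
    (hsold : ∀ μ : ℝ, SLSolInh q μ (f μ) (fd μ) (fxd μ))
    (a b : ℝ) (X X' : ℝ → ℝ)
    (hX : ∀ μ ∈ Ioo a b, HasDerivAt X (X' μ) μ)
    (hXmem : ∀ μ ∈ Ioo a b, X μ ∈ Ioc (0:ℝ) π)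
    (hXzero : ∀ μ ∈ Ioo a b, f μ (X μ) = 0) :
    ∀ μ ∈ Ioo a b, X' μ ≤ 0 ∧ (X' μ = 0 → X μ = 0) ∧ X' μ < 0 := by
  intro μ hμ
  have hx₀ : X μ ∈ Icc 0 π := Ioc_subset_Icc_self (hXmem μ hμ)
  have h0 : (0:ℝ) ∈ Icc 0 π := left_mem_Icc.2 pi_pos.le
  have hnear : Ioo a b ∈ 𝓝 μ := Ioo_mem_nhds hμ.1 hμ.2
  have hfd0 : fd μ 0 = 0 := (hfd μ 0 h0).unique <|
    (hasDerivAt_const μ (sin α)).congr_of_eventuallyEq (.of_forall fun m => (hinit m).1)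
  have hfxd0 : fxd μ 0 = 0 := (hfxd μ 0 h0).unique <|
    (hasDerivAt_const μ (-cos α)).congr_of_eventuallyEq (.of_forall fun m => (hinit m).2)
  have hW : fd μ (X μ) * fx μ (X μ) = ∫ t in (0:ℝ)..X μ, f μ t ^ 2 := by
    simpa [hfd0, hfxd0, hXzero μ hμ] using (hsold μ).wronskian_eq hq (hsol μ) hx₀
  have hpos : 0 < ∫ t in (0:ℝ)..X μ, f μ t ^ 2 := by
    refine (hsol μ).integral_sq_pos ?_ (hXmem μ hμ)
    rw [(hinit μ).1, (hinit μ).2, neg_ne_zero, ← not_and_or]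
    rintro ⟨hs, hc⟩
    simpa [hs, hc] using sin_sq_add_cos_sq α
  have hchain : HasDerivAt (fun m => f m (X m)) (fd μ (X μ) + X' μ * fx μ (X μ)) μ :=
    hasDerivAt_comp_of_tendsto_prod ordConnected_Icc (fun m => (hsol m).2.1)
      (fun m _ ht _ ht' => (hsol m).sub_eq_integral ht ht') (hfd μ _ hx₀)
      (SLSol.tendsto_deriv_prod hq hsol hx₀ (hfd μ _ hx₀).continuousAt
        (hfxd μ _ hx₀).continuousAt)
      (hX μ hμ) (Filter.mem_of_superset hnear fun m hm => Ioc_subset_Icc_self (hXmem m hm))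
  have hflat : HasDerivAt (fun m => f m (X m)) 0 μ :=
    (hasDerivAt_const μ 0).congr_of_eventuallyEq (Filter.mem_of_superset hnear hXzero)
  have hX' : X' μ * fx μ (X μ) ^ 2 = -∫ t in (0:ℝ)..X μ, f μ t ^ 2 := by
    linear_combination fx μ (X μ) * hchain.unique hflat - hW
  have hneg : X' μ < 0 := by
    by_contra! h
    linarith [mul_nonneg h (sq_nonneg (fx μ (X μ)))]
  exact ⟨hneg.le, fun h => absurd h hneg.ne, hneg⟩

/-- For a continuously differentiable zero curve `X(μ) ∈ (0, π]` of the solution family `f μ`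
normalized at `0`, the derivative satisfies `dX/dμ ≤ 0`, equality being possible only when
`X(μ) = 0`; since `X(μ) > 0`, the inequality is strict: `dX/dμ < 0`. -/
theorem zero_curve_deriv_nonpos_and_strict
    (q : ℝ → ℝ) (hq : IntervalIntegrable q volume 0 π)
    (α : ℝ) (hα : α ∈ Ioc (0:ℝ) π)
    (f fx fd fxd : ℝ → ℝ → ℝ)
    (hsol : ∀ μ : ℝ, SLSol q μ (f μ) (fx μ))
    (hinit : ∀ μ : ℝ, f μ 0 = sin α ∧ fx μ 0 = -cos α)
    (hfd : ∀ μ : ℝ, ∀ x ∈ Icc (0:ℝ) π, HasDerivAt (fun m => f m x) (fd μ x) μ)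
    (hfxd : ∀ μ : ℝ, ∀ x ∈ Icc (0:ℝ) π, HasDerivAt (fun m => fx m x) (fxd μ x) μ)
    (hsold : ∀ μ : ℝ, SLSolInh q μ (f μ) (fd μ) (fxd μ))
    (a b : ℝ) (X X' : ℝ → ℝ)
    (hX : ∀ μ ∈ Ioo a b, HasDerivAt X (X' μ) μ)
    (hXmem : ∀ μ ∈ Ioo a b, X μ ∈ Ioc (0:ℝ) π)
    (hXzero : ∀ μ ∈ Ioo a b, f μ (X μ) = 0) :
    ∀ μ ∈ Ioo a b, X' μ ≤ 0 ∧ (X' μ = 0 → X μ = 0) ∧ X' μ < 0 :=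
  zero_curve_deriv_nonpos_and_strict_general q hq α f fx fd fxd hsol hinit hfd hfxd hsold a b X X'
    hX hXmem hXzero
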